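/- arXiv:1810.01368 — 2 statements merged into one kernel-verified Lean document; each statement's English description precedes it below -/
import Mathlib

section
/- Let C = {x ∈ ℝ³ : σ(x) = 0, x₃ ≠ 0}, and define ḡ : ℝ³ \ C → ℝ² by ḡ(x) = g(x) if σ(x) ≠ 0 and x₃ ≠ 0, and ḡ(x) = (2x₁, 2x₂) if x₃ = 0. Then for every Δ > 0 and r > 0 there exists a > 0 such that |ḡ(x)| ≥ a for all x ∈ ℝ³ \ C with Q(x) ≥ Δ and |x| ≤ r. -/
/-- `σ x = √(x₁² + x₂²)`. -/
noncomputable def sigmaBI (x : EuclideanSpace ℝ (Fin 3)) : ℝ :=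
  Real.sqrt (x 0 ^ 2 + x 1 ^ 2)

/-- The goal function `Q(x) = (σ(x) − |x₃|)² + x₃²` for the Brockett integrator. -/
noncomputable def QBI (x : EuclideanSpace ℝ (Fin 3)) : ℝ :=
  (sigmaBI x - |x 2|) ^ 2 + (x 2) ^ 2

/-- First component of the speed-gradient vector `g(x)` for the Brockett integrator:
`g₁(x) = 2x₁ − 4x₂x₃ − 2|x₃|x₁/σ(x) + 2 sgn(x₃) x₂ σ(x)`. -/
noncomputable def g1BI (x : EuclideanSpace ℝ (Fin 3)) : ℝ :=
  2 * x 0 - 4 * x 1 * x 2 - 2 * |x 2| * x 0 / sigmaBI x + 2 * Real.sign (x 2) * x 1 * sigmaBI x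

/-- Second component of the speed-gradient vector `g(x)` for the Brockett integrator:
`g₂(x) = 2x₂ + 4x₁x₃ − 2|x₃|x₂/σ(x) − 2 sgn(x₃) x₁ σ(x)`. -/
noncomputable def g2BI (x : EuclideanSpace ℝ (Fin 3)) : ℝ :=
  2 * x 1 + 4 * x 0 * x 2 - 2 * |x 2| * x 1 / sigmaBI x - 2 * Real.sign (x 2) * x 0 * sigmaBI x

/-- The exceptional set: the `x₃`-axis without the origin. -/
def CBI : Set (EuclideanSpace ℝ (Fin 3)) := {x | sigmaBI x = 0 ∧ x 2 ≠ 0}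

/-- The vector `ḡ(x)`, defined off the set `C`: `ḡ(x) = g(x)` when `σ(x) ≠ 0, x₃ ≠ 0`, and
`ḡ(x) = (2x₁, 2x₂)` when `x₃ = 0`. -/
noncomputable def gbarBI (x : EuclideanSpace ℝ (Fin 3)) : ℝ × ℝ :=
  if x 2 = 0 then (2 * x 0, 2 * x 1) else (g1BI x, g2BI x)

/-!
With `p = (σ - |x₃|)²` and `q = x₃²` we have `Q = p + q`, and off the plane `x₃ = 0` a direct
computation gives `|g|² = 4p + 4(p - q)²` (note `σ(σ - 2|x₃|) = p - q`). If `Q ≥ Δ`, either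
`p ≥ Δ/4`, or `q - p > Δ/2`; in both cases `|ḡ|² ≥ min(Δ, Δ²)`. On the plane `x₃ = 0`,
`|ḡ|² = 4σ² = 4Q`.
-/

lemma g_formula_sq_add_sq {A B σ τ s : ℝ} (hσ : σ ≠ 0) (hσsq : σ ^ 2 = A ^ 2 + B ^ 2)
    (hs : s ^ 2 = 1) :
    (2 * A - 4 * B * (s * τ) - 2 * τ * A / σ + 2 * s * B * σ) ^ 2
      + (2 * B + 4 * A * (s * τ) - 2 * τ * B / σ - 2 * s * A * σ) ^ 2
      = 4 * (σ - τ) ^ 2 + 4 * ((σ - τ) ^ 2 - τ ^ 2) ^ 2 := by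
  field_simp
  linear_combination (-4 * (σ - τ) ^ 2 - 4 * σ ^ 2 * (σ - 2 * τ) ^ 2) * hσsq
      + 4 * (A ^ 2 + B ^ 2) * σ ^ 2 * (σ - 2 * τ) ^ 2 * hs

lemma min_le_four_mul_add_four_mul_sq {Δ p q : ℝ} (hp : 0 ≤ p) (h : Δ ≤ p + q) :
    min Δ (Δ ^ 2) ≤ 4 * p + 4 * (p - q) ^ 2 := by
  rcases le_or_gt (Δ / 4) p with hp' | hp'
  · exact (min_le_left _ _).trans (by nlinarith)
  rcases le_or_gt Δ 0 with hΔ | hΔ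
  · exact (min_le_left _ _).trans (by nlinarith)
  · exact (min_le_right _ _).trans (by nlinarith)

lemma Real.sign_mul_abs (t : ℝ) : Real.sign t * |t| = t := by
  rcases lt_trichotomy t 0 with h | rfl | h
  · rw [Real.sign_of_neg h, abs_of_neg h]; ring
  · simp
  · rw [Real.sign_of_pos h, abs_of_pos h]; ring

lemma Real.sign_sq_of_ne_zero {t : ℝ} (ht : t ≠ 0) : Real.sign t ^ 2 = 1 := by
  rcases Real.sign_apply_eq_of_ne_zero t ht with h | h <;> rw [h] <;> norm_num

section BrockettIntegrator

lemma sigmaBI_sq (x : EuclideanSpace ℝ (Fin 3)) : sigmaBI x ^ 2 = x 0 ^ 2 + x 1 ^ 2 :=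
  Real.sq_sqrt (by positivity)

variable {x : EuclideanSpace ℝ (Fin 3)}

lemma g1BI_sq_add_g2BI_sq (hσ : sigmaBI x ≠ 0) (hx : x 2 ≠ 0) :
    g1BI x ^ 2 + g2BI x ^ 2
      = 4 * (sigmaBI x - |x 2|) ^ 2 + 4 * ((sigmaBI x - |x 2|) ^ 2 - x 2 ^ 2) ^ 2 := by
  have h := g_formula_sq_add_sq (τ := |x 2|) hσ (sigmaBI_sq x)
    (Real.sign_sq_of_ne_zero hx)
  rwa [Real.sign_mul_abs, sq_abs] at h

lemma gbarBI_sq_add_sq_of_eq_zero (hx : x 2 = 0) :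
    (gbarBI x).1 ^ 2 + (gbarBI x).2 ^ 2 = 4 * QBI x := by
  rw [gbarBI, if_pos hx, QBI, hx, abs_zero, sub_zero]
  linear_combination 4 * (sigmaBI_sq x).symm

lemma min_le_gbarBI_sq_add_sq {Δ : ℝ} (hC : x ∉ CBI) (hQ : Δ ≤ QBI x) :
    min Δ (Δ ^ 2) ≤ (gbarBI x).1 ^ 2 + (gbarBI x).2 ^ 2 := by
  by_cases hx : x 2 = 0
  · have hQ_nonneg : 0 ≤ QBI x := by unfold QBI; positivity
    rw [gbarBI_sq_add_sq_of_eq_zero hx]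
    exact (min_le_left _ _).trans (by linarith)
  · have hσ : sigmaBI x ≠ 0 := fun h => hC ⟨h, hx⟩
    rw [gbarBI, if_neg hx, g1BI_sq_add_g2BI_sq hσ hx]
    exact min_le_four_mul_add_four_mul_sq (sq_nonneg _) hQ

end BrockettIntegrator

theorem gbarBI_bounded_below_general (Δ r : ℝ) (hΔ : 0 < Δ) :
    ∃ a : ℝ, 0 < a ∧ ∀ x : EuclideanSpace ℝ (Fin 3), x ∉ CBI → Δ ≤ QBI x → ‖x‖ ≤ r →
      a ≤ Real.sqrt ((gbarBI x).1 ^ 2 + (gbarBI x).2 ^ 2) :=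
  ⟨Real.sqrt (min Δ (Δ ^ 2)), Real.sqrt_pos.2 (lt_min hΔ (by positivity)),
    fun _ hC hQ _ => Real.sqrt_le_sqrt (min_le_gbarBI_sq_add_sq hC hQ)⟩

/-- Assumption 4 of Theorem 1 holds for the Brockett integrator: for every `Δ > 0` and
`r > 0` there is `a > 0` such that the Euclidean norm of `ḡ(x)` is at least `a` for all
`x ∉ C` with `Q(x) ≥ Δ` and `|x| ≤ r`. -/
theorem gbarBI_bounded_below (Δ r : ℝ) (hΔ : 0 < Δ) (hr : 0 < r) :
    ∃ a : ℝ, 0 < a ∧ ∀ x : EuclideanSpace ℝ (Fin 3), x ∉ CBI → Δ ≤ QBI x → ‖x‖ ≤ r →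
      a ≤ Real.sqrt ((gbarBI x).1 ^ 2 + (gbarBI x).2 ^ 2) :=
  gbarBI_bounded_below_general Δ r hΔ
end

section
/- Let γ > 0, x₃(0) > 0 and σ(x(0)) ≠ 0, and let x : [0, t₀) → ℝ³ be a maximal continuously differentiable solution of the closed-loop Brockett system ẋ₁ = −γg₁(x)/|g(x)|, ẋ₂ = −γg₂(x)/|g(x)|, ẋ₃ = x₁ẋ₂ − x₂ẋ₁ with σ(x(t)) ≠ 0 and x₃(t) ≠ 0 for all t ∈ [0, t₀), where t₀ ≤ ∞. Then x₃(t) → 0 as t → t₀ if and only if σ(x(t)) → 0 as t → t₀; consequently, if t₀ < ∞ then x(t) → 0 as t → t₀. -/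
/-- The Euclidean norm `|g(x)|` of the speed-gradient vector. -/
noncomputable def ngBI (x : EuclideanSpace ℝ (Fin 3)) : ℝ :=
  Real.sqrt (g1BI x ^ 2 + g2BI x ^ 2)

/-- The right-hand side of the closed-loop Brockett system
`ẋ₁ = −γg₁(x)/|g(x)|, ẋ₂ = −γg₂(x)/|g(x)|, ẋ₃ = x₁ẋ₂ − x₂ẋ₁`. -/
noncomputable def brockettRHS (γ : ℝ) (y : EuclideanSpace ℝ (Fin 3)) :
    EuclideanSpace ℝ (Fin 3) :=
  (WithLp.equiv 2 (Fin 3 → ℝ)).symm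
    ![-γ * g1BI y / ngBI y,
      -γ * g2BI y / ngBI y,
      y 0 * (-γ * g2BI y / ngBI y) - y 1 * (-γ * g1BI y / ngBI y)]



open Filter Topology Set

/-!
While `x₃ > 0`, the closed loop is seen by `s = σ(x)` and `c = x₃` alone: with `N = |g(x)|`,
`N² = 4((s - c)² + s²(s - 2c)²)`, `ṡ = 2γ(c - s)/N` and `ċ = 2γs²(s - 2c)/N`.

For a global solution, `s → 0` forces `c → 0`: once `s < ε`, `ċ < 0` on the level `c = ε`, so
`c` cannot cross it upwards; and `c` does get below `ε`, for otherwise `2s ≤ c` eventually and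
then `ṡ ≥ γ/(1 + 3ε)`, so `s` would be unbounded. Symmetrically `c → 0` forces `s → 0`.

For a solution on `[0, t₀)` with `t₀` finite, `|ṡ| ≤ γ` keeps `σ` bounded, hence `|ẋ|` is
bounded and `x(t)` has a limit `L` as `t → t₀`. If `σ(L) > 0` and `L₃ > 0`, the vector field is
`C¹` near `L` and Picard–Lindelöf extends the solution past `t₀`. If exactly one of `σ(L)`, `L₃`
vanishes, the positive coordinate that tends to `0` is eventually increasing (e.g. `s → 0` with
`c → L₃ > 0` gives `ṡ > 0`), which is absurd. So `L = 0`.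
-/

lemma EReal.comap_coe_nhdsLT_coe (T : ℝ) :
    comap ((↑) : ℝ → EReal) (𝓝[<] (T : EReal)) = 𝓝[<] T := by
  rw [nhdsWithin, nhdsWithin, comap_inf, ← EReal.isEmbedding_coe.isInducing.nhds_eq_comap,
    comap_principal]
  congr 2
  ext; simp

lemma EReal.comap_coe_nhdsLT_top : comap ((↑) : ℝ → EReal) (𝓝[<] ⊤) = atTop := by
  rw [nhdsWithin, EReal.nhds_top', comap_inf, comap_principal, comap_iInf]
  simp only [comap_principal]
  have hpre : ∀ a : ℝ, ((↑) : ℝ → EReal) ⁻¹' Ioi (a : EReal) = Ioi a := fun a => by ext; simp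
  simp [hpre, atTop_basis_Ioi.eq_biInf]

lemma IsPreconnected.pos_of_ne_zero {X : Type*} [TopologicalSpace X] {I : Set X} {f : X → ℝ}
    (hI : IsPreconnected I) (hf : ContinuousOn f I) (hne : ∀ t ∈ I, f t ≠ 0) {a : X}
    (ha : a ∈ I) (hfa : 0 < f a) : ∀ t ∈ I, 0 < f t := by
  intro t ht
  refine (hne t ht).lt_or_gt.resolve_left fun hlt => ?_
  obtain ⟨s, hs, hfs⟩ := hI.intermediate_value ht ha hf ⟨hlt.le, hfa.le⟩
  exact hne s hs hfs

lemma UniformContinuousOn.cauchy_map {α β : Type*} [UniformSpace α] [UniformSpace β]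
    {f : α → β} {s : Set α} {l : Filter α} (hf : UniformContinuousOn f s) (hl : Cauchy l)
    (hls : l ≤ 𝓟 s) : Cauchy (map f l) :=
  ⟨hl.1.map f, by
    rw [prod_map_map_eq]
    exact hf.mono_left <| le_inf hl.2 <| by
      simpa [prod_principal_principal] using Filter.prod_mono hls hls⟩

section RealAnalysis

variable {f F : ℝ → ℝ}

lemma tendsto_atTop_of_eventually_le_deriv {k : ℝ} (hk : 0 < k)
    (hf : ∀ᶠ t in atTop, HasDerivAt f (F t) t ∧ k ≤ F t) : Tendsto f atTop atTop := by
  obtain ⟨a, ha⟩ := eventually_atTop.1 hf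
  have hgrow : ∀ t ≥ a, k * (t - a) ≤ f t - f a := fun t ht =>
    (convex_Ici a).mul_sub_le_image_sub_of_le_deriv
      (fun s hs => (ha s hs).1.continuousAt.continuousWithinAt)
      (fun s hs => (ha s (interior_subset hs)).1.differentiableAt.differentiableWithinAt)
      (fun s hs => (ha s (interior_subset hs)).1.deriv ▸ (ha s (interior_subset hs)).2)
      a self_mem_Ici t ht ht
  refine tendsto_atTop_mono' atTop (eventually_atTop.2 ⟨a, fun t ht => ?_⟩)
    (tendsto_atTop_add_const_left _ (f a)
      ((tendsto_atTop_add_const_right atTop (-a) tendsto_id).const_mul_atTop hk))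
  simp only [id]
  linarith [hgrow t ht]

lemma eventually_le_of_frequently_le_of_deriv_neg {c : ℝ}
    (hf : ∀ᶠ t in atTop, HasDerivAt f (F t) t)
    (hbar : ∀ᶠ t in atTop, f t = c → F t < 0) (hfreq : ∃ᶠ t in atTop, f t ≤ c) :
    ∀ᶠ t in atTop, f t ≤ c := by
  obtain ⟨a, ha⟩ := eventually_atTop.1 (hf.and hbar)
  obtain ⟨b, hab, hb⟩ := frequently_atTop.1 hfreq a
  refine eventually_atTop.2 ⟨b, fun t hbt => ?_⟩
  exact image_le_of_deriv_right_lt_deriv_boundary (B := fun _ => c) (B' := fun _ => 0)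
    (fun s hs => (ha s (hab.trans hs.1)).1.continuousAt.continuousWithinAt)
    (fun s hs => (ha s (hab.trans hs.1)).1.hasDerivWithinAt)
    hb (fun _ => hasDerivAt_const _ _) (fun s hs => (ha s (hab.trans hs.1)).2) ⟨hbt, le_rfl⟩

lemma tendsto_zero_of_frequently_le_of_barrier (hpos : ∀ᶠ t in atTop, 0 < f t)
    (hf : ∀ᶠ t in atTop, HasDerivAt f (F t) t)
    (hbar : ∀ ε > 0, ∀ᶠ t in atTop, f t = ε → F t < 0)
    (hfreq : ∀ ε > 0, ∃ᶠ t in atTop, f t ≤ ε) : Tendsto f atTop (𝓝 0) := by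
  refine tendsto_order.2 ⟨fun a ha => hpos.mono fun t ht => ha.trans ht, fun ε hε => ?_⟩
  filter_upwards [eventually_le_of_frequently_le_of_deriv_neg hf (hbar _ (half_pos hε))
    (hfreq _ (half_pos hε))] with t ht
  linarith

lemma not_tendsto_nhdsLT_zero_of_deriv_nonneg {T : ℝ}
    (hf : ∀ᶠ t in 𝓝[<] T, HasDerivAt f (F t) t ∧ 0 ≤ F t ∧ 0 < f t) :
    ¬ Tendsto f (𝓝[<] T) (𝓝 0) := by
  intro hlim
  obtain ⟨a, haT, ha⟩ := mem_nhdsLT_iff_exists_Ioo_subset.1 hf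
  have hmono : MonotoneOn f (Ioo a T) :=
    monotoneOn_of_hasDerivWithinAt_nonneg (convex_Ioo a T)
      (fun s hs => (ha hs).1.continuousAt.continuousWithinAt)
      (fun s hs => (ha (interior_subset hs)).1.hasDerivWithinAt)
      (fun s hs => (ha (interior_subset hs)).2.1)
  obtain ⟨b, hb⟩ := nonempty_Ioo.2 (show a < T from haT)
  have : f b ≤ 0 := ge_of_tendsto hlim <| mem_of_superset (Ioo_mem_nhdsLT hb.2)
    fun t ht => hmono hb ⟨hb.1.trans ht.1, ht.2⟩ ht.1.le
  exact (ha hb).2.2.not_ge this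

end RealAnalysis

section ODE

variable {E : Type*} [NormedAddCommGroup E] [NormedSpace ℝ E]

lemma exists_tendsto_nhdsLT_of_norm_deriv_le [CompleteSpace E] {f f' : ℝ → E} {a b C : ℝ}
    (hab : a < b) (hf : ∀ t ∈ Ico a b, HasDerivWithinAt f (f' t) (Ico a b) t)
    (hC : ∀ t ∈ Ico a b, ‖f' t‖ ≤ C) : ∃ L, Tendsto f (𝓝[<] b) (𝓝 L) := by
  have hlip := (convex_Ico a b).lipschitzOnWith_of_nnnorm_hasDerivWithin_le hf
    (C := C.toNNReal) fun t ht => by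
      rw [← NNReal.coe_le_coe, coe_nnnorm]
      exact (hC t ht).trans (Real.le_coe_toNNReal C)
  exact cauchy_map_iff_exists_tendsto.1 <| hlip.uniformContinuousOn.cauchy_map
    (cauchy_nhds.mono nhdsWithin_le_nhds) (le_principal_iff.2 (Ico_mem_nhdsLT hab))

variable {v : E → E} {x : ℝ → E} {L : E} {a T : ℝ}

lemma hasDerivAt_ite_lt_of_tendsto {α : ℝ → E} (haT : a < T)
    (hx : ∀ t ∈ Ioo a T, HasDerivAt x (v (x t)) t) (hL : Tendsto x (𝓝[<] T) (𝓝 L))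
    (hv : ContinuousAt v L) (hα : HasDerivAt α (v L) T) (hαT : α T = L) :
    HasDerivAt (fun t => if t < T then x t else α t) (v L) T := by
  set y := fun t => if t < T then x t else α t
  have hyT : y T = L := by simp [y, hαT]
  have hIoo : Ioo a T ∈ 𝓝[<] T := Ioo_mem_nhdsLT haT
  have hy : ∀ t ∈ Ioo a T, HasDerivAt y (v (x t)) t := fun t ht =>
    (hx t ht).congr_of_eventuallyEq ((eventually_lt_nhds ht.2).mono fun _ hs => if_pos hs)
  have hleft : HasDerivWithinAt y (v L) (Iic T) T := by
    refine hasDerivWithinAt_Iic_of_tendsto_deriv (s := Ioo a T)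
      (fun t ht => (hy t ht).differentiableAt.differentiableWithinAt) ?_ hIoo ?_
    · rw [ContinuousWithinAt, hyT]
      refine (hL.mono_left (nhdsWithin_mono _ Ioo_subset_Iio_self)).congr' ?_
      filter_upwards [self_mem_nhdsWithin] with t ht using (if_pos ht.2).symm
    · refine (hv.tendsto.comp hL).congr' ?_
      filter_upwards [hIoo] with t ht using (hy t ht).deriv.symm
  have hright : HasDerivWithinAt y (v L) (Ici T) T :=
    hα.hasDerivWithinAt.congr_of_mem (fun t ht => if_neg (not_lt.2 ht)) self_mem_Ici
  simpa [Iic_union_Ici] using hleft.union hright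

lemma exists_extension_of_tendsto_nhdsLT [CompleteSpace E] {U : Set E} (haT : a < T)
    (hx : ∀ t ∈ Ico a T, HasDerivWithinAt x (v (x t)) (Ico a T) t)
    (hL : Tendsto x (𝓝[<] T) (𝓝 L)) (hv : ContDiffAt ℝ 1 v L) (hU : U ∈ 𝓝 L)
    (hxU : ∀ t ∈ Ico a T, x t ∈ U) :
    ∃ ε > 0, ∃ y : ℝ → E, EqOn y x (Ico a T) ∧
      ∀ t ∈ Ico a (T + ε), y t ∈ U ∧ HasDerivWithinAt y (v (y t)) (Ico a (T + ε)) t := by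
  obtain ⟨α, hαT, ε₀, hε₀, hα⟩ :=
    hv.exists_forall_mem_closedBall_exists_eq_forall_mem_Ioo_hasDerivAt₀ T
  obtain ⟨ε₁, hε₁, hαU⟩ := Metric.eventually_nhds_iff.1 <|
    (hα T ⟨by linarith, by linarith⟩).continuousAt.preimage_mem_nhds (hαT ▸ hU)
  refine ⟨min ε₀ ε₁, lt_min hε₀ hε₁, fun t => if t < T then x t else α t,
    fun t ht => if_pos ht.2, fun t ht => ?_⟩
  obtain ⟨htε₀, htε₁⟩ := lt_min_iff.1 (add_min T ε₀ ε₁ ▸ ht.2)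
  rcases lt_or_ge t T with htT | hTt
  · simp only [if_pos htT]
    refine ⟨hxU t ⟨ht.1, htT⟩, ?_⟩
    refine ((hx t ⟨ht.1, htT⟩).mono_of_mem_nhdsWithin ?_).congr_of_eventuallyEq
      (eventually_nhdsWithin_of_eventually_nhds <|
        (eventually_lt_nhds htT).mono fun _ hs => if_pos hs) (if_pos htT)
    exact mem_nhdsWithin.2 ⟨Iio T, isOpen_Iio, htT, fun s hs => ⟨hs.2.1, hs.1⟩⟩
  · simp only [if_neg (not_lt.2 hTt)]
    refine ⟨hαU (by rw [Real.dist_eq, abs_of_nonneg (by linarith)]; linarith), ?_⟩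
    refine HasDerivAt.hasDerivWithinAt ?_
    rcases hTt.eq_or_lt with rfl | hTt
    · rw [hαT]
      exact hasDerivAt_ite_lt_of_tendsto haT
        (fun s hs => (hx s ⟨hs.1.le, hs.2⟩).hasDerivAt (Ico_mem_nhds hs.1 hs.2)) hL
        hv.continuousAt (hαT ▸ hα _ ⟨by linarith, by linarith⟩) hαT
    · exact (hα t ⟨by linarith, htε₀⟩).congr_of_eventuallyEq
        ((eventually_gt_nhds hTt).mono fun _ hs => if_neg (not_lt.2 hs.le))

end ODE

lemma sq_sigmaBI (y : EuclideanSpace ℝ (Fin 3)) : sigmaBI y ^ 2 = y 0 ^ 2 + y 1 ^ 2 :=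
  Real.sq_sqrt (by positivity)

lemma sigmaBI_pos {y : EuclideanSpace ℝ (Fin 3)} (hσ : sigmaBI y ≠ 0) : 0 < sigmaBI y :=
  (Real.sqrt_nonneg _).lt_of_ne' hσ

lemma sigmaBI_zero : sigmaBI 0 = 0 := by
  simp [sigmaBI]

lemma continuous_sigmaBI : Continuous sigmaBI := by
  unfold sigmaBI; fun_prop

lemma eq_zero_of_sigmaBI_eq_zero {y : EuclideanSpace ℝ (Fin 3)} (hσ : sigmaBI y = 0)
    (h3 : y 2 = 0) : y = 0 := by
  have h01 : y 0 ^ 2 + y 1 ^ 2 = 0 := by rw [← sq_sigmaBI, hσ]; ring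
  have h0 : y 0 = 0 := pow_eq_zero_iff two_ne_zero |>.1 (by nlinarith [sq_nonneg (y 1)])
  have h1 : y 1 = 0 := pow_eq_zero_iff two_ne_zero |>.1 (by nlinarith [sq_nonneg (y 0)])
  ext i
  fin_cases i <;> simp [h0, h1, h3]

/-- `|g(x)|` in the coordinates `s = σ(x)`, `c = x₃`, valid for `x₃ > 0`. -/
noncomputable def brockettNorm (s c : ℝ) : ℝ :=
  √(4 * ((s - c) ^ 2 + s ^ 2 * (s - 2 * c) ^ 2))

noncomputable def sigmaRate (γ s c : ℝ) : ℝ := 2 * γ * (c - s) / brockettNorm s c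

noncomputable def x3Rate (γ s c : ℝ) : ℝ := 2 * γ * s ^ 2 * (s - 2 * c) / brockettNorm s c

section Field

variable {y : EuclideanSpace ℝ (Fin 3)} (hσ : sigmaBI y ≠ 0) (h3 : 0 < y 2)
include hσ h3

lemma mul_g1BI_add_mul_g2BI :
    y 0 * g1BI y + y 1 * g2BI y = 2 * sigmaBI y * (sigmaBI y - y 2) := by
  have := sq_sigmaBI y
  rw [g1BI, g2BI, Real.sign_of_pos h3, abs_of_pos h3]
  field_simp
  linear_combination (2 * y 2 - 2 * sigmaBI y) * this

lemma mul_g2BI_sub_mul_g1BI :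
    y 0 * g2BI y - y 1 * g1BI y = 2 * sigmaBI y ^ 2 * (2 * y 2 - sigmaBI y) := by
  have := sq_sigmaBI y
  rw [g1BI, g2BI, Real.sign_of_pos h3, abs_of_pos h3]
  field_simp
  linear_combination (2 * sigmaBI y ^ 2 - 4 * y 2 * sigmaBI y) * this

lemma ngBI_eq_brockettNorm : ngBI y = brockettNorm (sigmaBI y) (y 2) := by
  have key : sigmaBI y ^ 2 * (g1BI y ^ 2 + g2BI y ^ 2)
      = (y 0 * g1BI y + y 1 * g2BI y) ^ 2 + (y 0 * g2BI y - y 1 * g1BI y) ^ 2 := by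
    linear_combination (g1BI y ^ 2 + g2BI y ^ 2) * sq_sigmaBI y
  rw [mul_g1BI_add_mul_g2BI hσ h3, mul_g2BI_sub_mul_g1BI hσ h3] at key
  rw [ngBI, brockettNorm]
  congr 1
  apply mul_left_cancel₀ (pow_ne_zero 2 hσ)
  linear_combination key

end Field

section Rates

variable {γ s c : ℝ}

lemma brockettNorm_pos (hs : 0 < s) : 0 < brockettNorm s c := by
  apply Real.sqrt_pos.2
  rcases eq_or_ne s c with rfl | hsc
  · nlinarith [pow_pos hs 4]
  · have := pow_pos (abs_pos.2 (sub_ne_zero.2 hsc)) 2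
    rw [sq_abs] at this
    nlinarith [sq_nonneg (s * (s - 2 * c))]

lemma abs_sigmaRate_le (hγ : 0 ≤ γ) (hs : 0 < s) : |sigmaRate γ s c| ≤ γ := by
  have hN := brockettNorm_pos (c := c) hs
  have : 2 * |c - s| ≤ brockettNorm s c := by
    rw [brockettNorm]
    refine Real.le_sqrt_of_sq_le ?_
    nlinarith [sq_abs (c - s), sq_nonneg (s * (s - 2 * c))]
  rw [sigmaRate, abs_div, abs_of_pos hN, div_le_iff₀ hN, abs_mul, abs_mul, abs_of_nonneg hγ]
  norm_num
  nlinarith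

lemma sigmaRate_neg (hγ : 0 < γ) (hs : 0 < s) (hcs : c < s) : sigmaRate γ s c < 0 :=
  div_neg_of_neg_of_pos (by nlinarith) (brockettNorm_pos hs)

lemma x3Rate_neg (hγ : 0 < γ) (hs : 0 < s) (hsc : s < 2 * c) : x3Rate γ s c < 0 :=
  div_neg_of_neg_of_pos (mul_neg_of_pos_of_neg (by positivity) (by linarith))
    (brockettNorm_pos hs)

lemma div_le_sigmaRate (hγ : 0 < γ) (hs : 0 < s) (hsc : 2 * s ≤ c) :
    γ / (1 + 3 * s) ≤ sigmaRate γ s c := by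
  have hcs : 0 < c - s := by linarith
  have hN : brockettNorm s c ≤ 2 * (1 + 3 * s) * (c - s) := by
    have h : (2 * c - s) ^ 2 ≤ (3 * (c - s)) ^ 2 :=
      pow_le_pow_left₀ (by linarith) (by linarith) 2
    rw [brockettNorm, Real.sqrt_le_left (by positivity)]
    nlinarith [mul_le_mul_of_nonneg_left h (sq_nonneg s), mul_pos hs (pow_pos hcs 2)]
  calc γ / (1 + 3 * s) = 2 * γ * (c - s) / (2 * (1 + 3 * s) * (c - s)) := by
        field_simp
    _ ≤ sigmaRate γ s c :=
        div_le_div_of_nonneg_left (by positivity) (brockettNorm_pos hs) hN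

lemma div_le_x3Rate {ε : ℝ} (hγ : 0 < γ) (hε : 0 < ε) (hεs : ε ≤ s) (hc : 0 ≤ c)
    (hcs : 4 * c ≤ s) :
    γ * ε ^ 2 / (2 * (1 + ε)) ≤ x3Rate γ s c := by
  have hs : 0 < s := hε.trans_le hεs
  have hN : brockettNorm s c ≤ 2 * s * (1 + s) := by
    rw [brockettNorm, Real.sqrt_le_left (by positivity)]
    nlinarith [mul_le_mul_of_nonneg_left (show (s - 2 * c) ^ 2 ≤ s ^ 2 by nlinarith) (sq_nonneg s)]
  calc γ * ε ^ 2 / (2 * (1 + ε)) ≤ γ * s ^ 2 / (2 * (1 + s)) := by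
        rw [div_le_div_iff₀ (by positivity) (by positivity)]
        nlinarith [mul_nonneg (mul_nonneg hγ.le (sub_nonneg.2 hεs)) (add_pos hs hε).le,
          mul_nonneg (mul_nonneg hγ.le (sub_nonneg.2 hεs)) (mul_pos hs hε).le]
    _ = 2 * γ * s ^ 2 * (s / 2) / (2 * s * (1 + s)) := by
        field_simp
    _ ≤ 2 * γ * s ^ 2 * (s - 2 * c) / (2 * s * (1 + s)) := by
        gcongr; linarith
    _ ≤ x3Rate γ s c :=
        div_le_div_of_nonneg_left
          (mul_nonneg (by positivity) (by linarith)) (brockettNorm_pos hs) hN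

end Rates

lemma brockettRHS_apply_two (γ : ℝ) (y : EuclideanSpace ℝ (Fin 3)) :
    brockettRHS γ y 2 = y 0 * brockettRHS γ y 1 - y 1 * brockettRHS γ y 0 := rfl

section Trajectory

variable {γ : ℝ} {y : EuclideanSpace ℝ (Fin 3)}

lemma ngBI_ne_zero (hσ : sigmaBI y ≠ 0) (h3 : 0 < y 2) : ngBI y ≠ 0 := by
  rw [ngBI_eq_brockettNorm hσ h3]
  exact (brockettNorm_pos (sigmaBI_pos hσ)).ne'

lemma norm_brockettRHS_le (hγ : 0 ≤ γ) (hσ : sigmaBI y ≠ 0) (h3 : 0 < y 2) :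
    ‖brockettRHS γ y‖ ≤ γ * (1 + sigmaBI y) := by
  have hN := ngBI_ne_zero hσ h3
  have hplanar : brockettRHS γ y 0 ^ 2 + brockettRHS γ y 1 ^ 2 = γ ^ 2 := by
    show (-γ * g1BI y / ngBI y) ^ 2 + (-γ * g2BI y / ngBI y) ^ 2 = γ ^ 2
    have : ngBI y ^ 2 = g1BI y ^ 2 + g2BI y ^ 2 := Real.sq_sqrt (by positivity)
    field_simp
    linear_combination γ ^ 2 * this.symm
  have hvert : brockettRHS γ y 2 ^ 2 ≤ sigmaBI y ^ 2 * γ ^ 2 := by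
    rw [brockettRHS_apply_two, sq_sigmaBI, ← hplanar]
    nlinarith [sq_nonneg (y 0 * brockettRHS γ y 0 + y 1 * brockettRHS γ y 1)]
  have hσ0 : 0 ≤ sigmaBI y := Real.sqrt_nonneg _
  rw [EuclideanSpace.norm_eq, Real.sqrt_le_left (mul_nonneg hγ (by linarith)), Fin.sum_univ_three]
  simp only [Real.norm_eq_abs, sq_abs]
  nlinarith [mul_nonneg (mul_nonneg hγ hγ) hσ0]

lemma contDiffAt_brockettRHS (hσ : sigmaBI y ≠ 0) (h3 : 0 < y 2) :
    ContDiffAt ℝ 1 (brockettRHS γ) y := by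
  have hsign : ContDiffAt ℝ 1 (fun z : EuclideanSpace ℝ (Fin 3) => Real.sign (z 2)) y :=
    contDiffAt_const.congr_of_eventuallyEq <|
      ((PiLp.continuous_apply 2 _ 2).continuousAt.eventually
        (lt_mem_nhds h3)).mono fun _ hz => Real.sign_of_pos hz
  have habs : ContDiffAt ℝ 1 (fun z : EuclideanSpace ℝ (Fin 3) => |z 2|) y :=
    (contDiffAt_abs h3.ne').comp (f := fun z : EuclideanSpace ℝ (Fin 3) => z 2) y
      (by fun_prop)
  have hσ' : ContDiffAt ℝ 1 sigmaBI y := by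
    unfold sigmaBI
    exact ContDiffAt.sqrt (by fun_prop) (by rw [← sq_sigmaBI]; positivity)
  have hg1 : ContDiffAt ℝ 1 g1BI y := by
    unfold g1BI; fun_prop (disch := assumption)
  have hg2 : ContDiffAt ℝ 1 g2BI y := by
    unfold g2BI; fun_prop (disch := assumption)
  have hN : ContDiffAt ℝ 1 ngBI y :=
    ContDiffAt.sqrt (by fun_prop) (Real.sqrt_ne_zero'.1 (ngBI_ne_zero hσ h3)).ne'
  have hN0 := ngBI_ne_zero hσ h3
  refine contDiffAt_piLp' _ fun i => ?_
  fin_cases i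
  · show ContDiffAt ℝ 1 (fun z => -γ * g1BI z / ngBI z) y
    fun_prop (disch := assumption)
  · show ContDiffAt ℝ 1 (fun z => -γ * g2BI z / ngBI z) y
    fun_prop (disch := assumption)
  · show ContDiffAt ℝ 1 (fun z => z 0 * (-γ * g2BI z / ngBI z) - z 1 * (-γ * g1BI z / ngBI z)) y
    fun_prop (disch := assumption)

variable {S : Set ℝ} {x : ℝ → EuclideanSpace ℝ (Fin 3)} {t : ℝ}

lemma hasDerivWithinAt_x3 (hx : HasDerivWithinAt x (brockettRHS γ (x t)) S t)
    (hσ : sigmaBI (x t) ≠ 0) (h3 : 0 < x t 2) :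
    HasDerivWithinAt (fun s => x s 2) (x3Rate γ (sigmaBI (x t)) (x t 2)) S t := by
  have h : HasDerivWithinAt (fun s => x s 2) (brockettRHS γ (x t) 2) S t :=
    (EuclideanSpace.proj (2 : Fin 3) (𝕜 := ℝ)).hasFDerivAt.comp_hasDerivWithinAt t hx
  convert h using 1
  show _ = x t 0 * (-γ * g2BI (x t) / ngBI (x t)) - x t 1 * (-γ * g1BI (x t) / ngBI (x t))
  have hN := ngBI_ne_zero hσ h3
  rw [x3Rate, ← ngBI_eq_brockettNorm hσ h3]
  field_simp
  linear_combination γ * mul_g2BI_sub_mul_g1BI hσ h3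

lemma hasDerivWithinAt_sigmaBI (hx : HasDerivWithinAt x (brockettRHS γ (x t)) S t)
    (hσ : sigmaBI (x t) ≠ 0) (h3 : 0 < x t 2) :
    HasDerivWithinAt (fun s => sigmaBI (x s)) (sigmaRate γ (sigmaBI (x t)) (x t 2)) S t := by
  have hcomp (i : Fin 3) : HasDerivWithinAt (fun s => x s i) (brockettRHS γ (x t) i) S t :=
    (EuclideanSpace.proj i (𝕜 := ℝ)).hasFDerivAt.comp_hasDerivWithinAt t hx
  have hsq : x t 0 ^ 2 + x t 1 ^ 2 ≠ 0 := by rw [← sq_sigmaBI]; exact pow_ne_zero 2 hσ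
  refine (((hcomp 0).fun_pow 2).fun_add ((hcomp 1).fun_pow 2)).sqrt hsq |>.congr_deriv ?_
  show (_ * _ * (-γ * g1BI (x t) / ngBI (x t)) + _ * _ * (-γ * g2BI (x t) / ngBI (x t))) /
    (2 * sigmaBI (x t)) = _
  have hN := ngBI_ne_zero hσ h3
  rw [sigmaRate, ← ngBI_eq_brockettNorm hσ h3]
  field_simp
  norm_num
  linear_combination -2 * γ * mul_g1BI_add_mul_g2BI hσ h3

end Trajectory

structure IsReducedBrockettFlow (γ : ℝ) (l : Filter ℝ) (s c : ℝ → ℝ) : Prop where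
  s_pos : ∀ᶠ t in l, 0 < s t
  c_pos : ∀ᶠ t in l, 0 < c t
  hasDerivAt_s : ∀ᶠ t in l, HasDerivAt s (sigmaRate γ (s t) (c t)) t
  hasDerivAt_c : ∀ᶠ t in l, HasDerivAt c (x3Rate γ (s t) (c t)) t

namespace IsReducedBrockettFlow

variable {γ : ℝ} {s c : ℝ → ℝ}

lemma of_solution {l : Filter ℝ} {x : ℝ → EuclideanSpace ℝ (Fin 3)}
    (h : ∀ᶠ t in l, HasDerivAt x (brockettRHS γ (x t)) t ∧ sigmaBI (x t) ≠ 0 ∧ 0 < x t 2) :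
    IsReducedBrockettFlow γ l (fun t => sigmaBI (x t)) (fun t => x t 2) where
  s_pos := h.mono fun _ ht => sigmaBI_pos ht.2.1
  c_pos := h.mono fun _ ht => ht.2.2
  hasDerivAt_s := h.mono fun _ ⟨hx, hσ, h3⟩ => by
    rw [← hasDerivWithinAt_univ] at hx ⊢
    exact hasDerivWithinAt_sigmaBI hx hσ h3
  hasDerivAt_c := h.mono fun _ ⟨hx, hσ, h3⟩ => by
    rw [← hasDerivWithinAt_univ] at hx ⊢
    exact hasDerivWithinAt_x3 hx hσ h3

theorem tendsto_c_of_tendsto_s (h : IsReducedBrockettFlow γ atTop s c) (hγ : 0 < γ)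
    (hs : Tendsto s atTop (𝓝 0)) : Tendsto c atTop (𝓝 0) := by
  refine tendsto_zero_of_frequently_le_of_barrier h.c_pos h.hasDerivAt_c (fun ε hε => ?_)
    (fun ε hε => ?_)
  · filter_upwards [h.s_pos, hs.eventually (gt_mem_nhds hε)] with t hst hsε hcε
    exact x3Rate_neg hγ hst (by linarith)
  · by_contra hfreq
    rw [not_frequently] at hfreq
    refine not_tendsto_nhds_of_tendsto_atTop (tendsto_atTop_of_eventually_le_deriv
      (F := fun t => sigmaRate γ (s t) (c t)) (k := γ / (1 + 3 * ε)) (by positivity) ?_) 0 hs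
    filter_upwards [h.s_pos, h.hasDerivAt_s, hfreq, hs.eventually (gt_mem_nhds (half_pos hε))]
      with t hst hderiv hcε hsε
    refine ⟨hderiv, le_trans ?_ (div_le_sigmaRate hγ hst (by linarith [not_le.1 hcε]))⟩
    gcongr
    linarith

theorem tendsto_s_of_tendsto_c (h : IsReducedBrockettFlow γ atTop s c) (hγ : 0 < γ)
    (hc : Tendsto c atTop (𝓝 0)) : Tendsto s atTop (𝓝 0) := by
  refine tendsto_zero_of_frequently_le_of_barrier h.s_pos h.hasDerivAt_s (fun ε hε => ?_)
    (fun ε hε => ?_)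
  · filter_upwards [hc.eventually (gt_mem_nhds hε)] with t hcε hsε
    exact sigmaRate_neg hγ (hsε ▸ hε) (hsε ▸ hcε)
  · by_contra hfreq
    rw [not_frequently] at hfreq
    refine not_tendsto_nhds_of_tendsto_atTop (tendsto_atTop_of_eventually_le_deriv
      (F := fun t => x3Rate γ (s t) (c t)) (k := γ * ε ^ 2 / (2 * (1 + ε))) (by positivity) ?_) 0 hc
    filter_upwards [h.c_pos, h.hasDerivAt_c, hfreq,
      hc.eventually (gt_mem_nhds (by positivity : 0 < ε / 4))] with t hct hderiv hsε hcε
    exact ⟨hderiv, div_le_x3Rate hγ hε (not_le.1 hsε).le hct.le (by linarith [not_le.1 hsε])⟩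

variable {T : ℝ}

theorem c_limit_eq_zero (h : IsReducedBrockettFlow γ (𝓝[<] T) s c) (hγ : 0 < γ)
    (hs : Tendsto s (𝓝[<] T) (𝓝 0)) {c₀ : ℝ} (hc : Tendsto c (𝓝[<] T) (𝓝 c₀)) : c₀ = 0 := by
  refine (ge_of_tendsto hc (h.c_pos.mono fun _ => le_of_lt)).eq_or_lt.resolve_right
    (fun hc₀ => ?_) |>.symm
  refine not_tendsto_nhdsLT_zero_of_deriv_nonneg (F := fun t => sigmaRate γ (s t) (c t)) ?_ hs
  filter_upwards [h.s_pos, h.hasDerivAt_s, hs.eventually (gt_mem_nhds (by positivity : 0 < c₀ / 4)),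
    hc.eventually (lt_mem_nhds (half_lt_self hc₀))] with t hst hderiv hsc hcc
  exact ⟨hderiv, (div_pos hγ (by positivity)).le.trans (div_le_sigmaRate hγ hst (by linarith)),
    hst⟩

theorem s_limit_eq_zero (h : IsReducedBrockettFlow γ (𝓝[<] T) s c) (hγ : 0 < γ)
    (hc : Tendsto c (𝓝[<] T) (𝓝 0)) {s₀ : ℝ} (hs : Tendsto s (𝓝[<] T) (𝓝 s₀)) : s₀ = 0 := by
  refine (ge_of_tendsto hs (h.s_pos.mono fun _ => le_of_lt)).eq_or_lt.resolve_right
    (fun hs₀ => ?_) |>.symm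
  refine not_tendsto_nhdsLT_zero_of_deriv_nonneg (F := fun t => x3Rate γ (s t) (c t)) ?_ hc
  filter_upwards [h.c_pos, h.hasDerivAt_c, hc.eventually (gt_mem_nhds (by positivity : 0 < s₀ / 8)),
    hs.eventually (lt_mem_nhds (half_lt_self hs₀))] with t hct hderiv hcs hss
  have hst : 0 < s t := by linarith
  exact ⟨hderiv, (by positivity : 0 ≤ γ * s t ^ 2 / (2 * (1 + s t))).trans
    (div_le_x3Rate hγ hst le_rfl hct.le (by linarith)), hct⟩

end IsReducedBrockettFlow

section Solutions

variable {γ T : ℝ} {x : ℝ → EuclideanSpace ℝ (Fin 3)}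

lemma brockett_x3_pos {I : Set ℝ} (hI : IsPreconnected I) (hx : ContinuousOn x I)
    (hoff : ∀ t ∈ I, x t 2 ≠ 0) (h0 : 0 ∈ I) (hx30 : 0 < x 0 2) : ∀ t ∈ I, 0 < x t 2 :=
  hI.pos_of_ne_zero
    ((PiLp.continuous_apply 2 _ 2).comp_continuousOn hx)
    hoff h0 hx30

theorem brockett_tendsto_x3_iff_tendsto_sigmaBI_atTop (hγ : 0 < γ)
    (hode : ∀ t ∈ Ici (0 : ℝ), HasDerivWithinAt x (brockettRHS γ (x t)) (Ici 0) t)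
    (hoff : ∀ t ∈ Ici (0 : ℝ), sigmaBI (x t) ≠ 0 ∧ x t 2 ≠ 0) (hx30 : 0 < x 0 2) :
    Tendsto (fun t => x t 2) atTop (𝓝 0) ↔ Tendsto (fun t => sigmaBI (x t)) atTop (𝓝 0) := by
  have h3 := brockett_x3_pos isPreconnected_Ici
    (fun t ht => (hode t ht).continuousWithinAt) (fun t ht => (hoff t ht).2) self_mem_Ici hx30
  have hflow := IsReducedBrockettFlow.of_solution (γ := γ) <|
    (eventually_gt_atTop 0).mono fun t ht =>
      ⟨(hode t ht.le).hasDerivAt (Ici_mem_nhds ht), (hoff t ht.le).1, h3 t ht.le⟩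
  exact ⟨hflow.tendsto_s_of_tendsto_c hγ, hflow.tendsto_c_of_tendsto_s hγ⟩

lemma brockett_exists_tendsto_nhdsLT (hγ : 0 < γ) (hT : 0 < T)
    (hode : ∀ t ∈ Ico 0 T, HasDerivWithinAt x (brockettRHS γ (x t)) (Ico 0 T) t)
    (hσ : ∀ t ∈ Ico 0 T, sigmaBI (x t) ≠ 0) (h3 : ∀ t ∈ Ico 0 T, 0 < x t 2) :
    ∃ L, Tendsto x (𝓝[<] T) (𝓝 L) := by
  have hσ_le : ∀ t ∈ Ico 0 T, sigmaBI (x t) ≤ sigmaBI (x 0) + γ * T := fun t ht => by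
    have := (convex_Ico 0 T).norm_image_sub_le_of_norm_hasDerivWithin_le
      (fun s hs => hasDerivWithinAt_sigmaBI (hode s hs) (hσ s hs) (h3 s hs))
      (fun s hs => abs_sigmaRate_le hγ.le (sigmaBI_pos (hσ s hs))) ⟨le_rfl, hT⟩ ht
    rw [Real.norm_eq_abs, Real.norm_eq_abs, sub_zero, abs_of_nonneg ht.1] at this
    nlinarith [le_abs_self (sigmaBI (x t) - sigmaBI (x 0)), ht.2]
  exact exists_tendsto_nhdsLT_of_norm_deriv_le (C := γ * (1 + (sigmaBI (x 0) + γ * T))) hT hode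
    fun t ht => (norm_brockettRHS_le hγ.le (hσ t ht) (h3 t ht)).trans <| by
      gcongr; exact hσ_le t ht

lemma brockett_limit_eq_zero (hγ : 0 < γ)
    (hflow : IsReducedBrockettFlow γ (𝓝[<] T) (fun t => sigmaBI (x t)) (fun t => x t 2))
    {L : EuclideanSpace ℝ (Fin 3)} (hL : Tendsto x (𝓝[<] T) (𝓝 L))
    (hL0 : sigmaBI L = 0 ∨ L 2 ≤ 0) : L = 0 := by
  have hs := (continuous_sigmaBI.tendsto L).comp hL
  have hc : Tendsto (fun t => x t 2) (𝓝[<] T) (𝓝 (L 2)) :=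
    ((PiLp.continuous_apply 2 _ 2).tendsto L).comp hL
  rcases hL0 with hσL | hL3
  · exact eq_zero_of_sigmaBI_eq_zero hσL (hflow.c_limit_eq_zero hγ (hσL ▸ hs) hc)
  · have hL3 : L 2 = 0 := le_antisymm hL3 (ge_of_tendsto hc (hflow.c_pos.mono fun _ => le_of_lt))
    exact eq_zero_of_sigmaBI_eq_zero (hflow.s_limit_eq_zero hγ (hL3 ▸ hc) hs) hL3

theorem brockett_tendsto_zero_or_extends (hγ : 0 < γ) (hT : 0 < T)
    (hode : ∀ t ∈ Ico 0 T, HasDerivWithinAt x (brockettRHS γ (x t)) (Ico 0 T) t)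
    (hoff : ∀ t ∈ Ico 0 T, sigmaBI (x t) ≠ 0 ∧ x t 2 ≠ 0) (hx30 : 0 < x 0 2) :
    Tendsto x (𝓝[<] T) (𝓝 0) ∨ ∃ ε > 0, ∃ y : ℝ → EuclideanSpace ℝ (Fin 3),
      EqOn y x (Ico 0 T) ∧ ∀ t ∈ Ico 0 (T + ε), sigmaBI (y t) ≠ 0 ∧ y t 2 ≠ 0 ∧
        HasDerivWithinAt y (brockettRHS γ (y t)) (Ico 0 (T + ε)) t := by
  have h3 := brockett_x3_pos isPreconnected_Ico
    (fun t ht => (hode t ht).continuousWithinAt) (fun t ht => (hoff t ht).2) ⟨le_rfl, hT⟩ hx30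
  obtain ⟨L, hL⟩ := brockett_exists_tendsto_nhdsLT hγ hT hode (fun t ht => (hoff t ht).1) h3
  by_cases hLU : sigmaBI L ≠ 0 ∧ 0 < L 2
  · have hU : {y : EuclideanSpace ℝ (Fin 3) | sigmaBI y ≠ 0 ∧ y 2 ≠ 0} ∈ 𝓝 L :=
      ((isOpen_ne_fun continuous_sigmaBI continuous_const).inter
        (isOpen_ne_fun (by fun_prop) continuous_const)).mem_nhds ⟨hLU.1, hLU.2.ne'⟩
    obtain ⟨ε, hε, y, hyx, hy⟩ := exists_extension_of_tendsto_nhdsLT hT hode hL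
      (contDiffAt_brockettRHS hLU.1 hLU.2) hU hoff
    exact .inr ⟨ε, hε, y, hyx, fun t ht => ⟨(hy t ht).1.1, (hy t ht).1.2, (hy t ht).2⟩⟩
  · have hflow := IsReducedBrockettFlow.of_solution (γ := γ) (x := x) <| by
      filter_upwards [Ioo_mem_nhdsLT hT] with t ht
      exact ⟨(hode t ⟨ht.1.le, ht.2⟩).hasDerivAt (Ico_mem_nhds ht.1 ht.2),
        (hoff t ⟨ht.1.le, ht.2⟩).1, h3 t ⟨ht.1.le, ht.2⟩⟩
    left
    rwa [brockett_limit_eq_zero hγ hflow hL ((not_and_or.1 hLU).imp not_not.1 not_lt.1)] at hL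

end Solutions

open Filter Topology in
theorem brockett_escape_iff_general (γ : ℝ) (hγ : 0 < γ) (t₀ : EReal) (ht₀ : 0 < t₀)
    (x : ℝ → EuclideanSpace ℝ (Fin 3))
    (hx30 : 0 < x 0 2)
    (hode : ∀ t ∈ {s : ℝ | 0 ≤ s ∧ (s : EReal) < t₀},
      HasDerivWithinAt x (brockettRHS γ (x t)) {s : ℝ | 0 ≤ s ∧ (s : EReal) < t₀} t)
    (hoff : ∀ t ∈ {s : ℝ | 0 ≤ s ∧ (s : EReal) < t₀}, sigmaBI (x t) ≠ 0 ∧ x t 2 ≠ 0)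
    (hmax : ∀ t₁ : EReal, t₀ < t₁ → ¬ ∃ y : ℝ → EuclideanSpace ℝ (Fin 3),
      (∀ t : ℝ, 0 ≤ t → (t : EReal) < t₀ → y t = x t) ∧
      ∀ t ∈ {s : ℝ | 0 ≤ s ∧ (s : EReal) < t₁}, sigmaBI (y t) ≠ 0 ∧ y t 2 ≠ 0 ∧
        HasDerivWithinAt y (brockettRHS γ (y t)) {s : ℝ | 0 ≤ s ∧ (s : EReal) < t₁} t) :
    (Tendsto (fun t => x t 2) (Filter.comap (fun t : ℝ => (t : EReal)) (𝓝[<] t₀)) (𝓝 0) ↔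
      Tendsto (fun t => sigmaBI (x t))
        (Filter.comap (fun t : ℝ => (t : EReal)) (𝓝[<] t₀)) (𝓝 0)) ∧
    (t₀ < ⊤ →
      Tendsto x (Filter.comap (fun t : ℝ => (t : EReal)) (𝓝[<] t₀)) (𝓝 0)) := by
  have hIco (T : ℝ) : {s : ℝ | 0 ≤ s ∧ (s : EReal) < T} = Ico 0 T := by ext; simp
  induction t₀ using EReal.rec with
  | bot => exact absurd ht₀ not_lt_bot
  | top =>
    have hIci : {s : ℝ | 0 ≤ s ∧ (s : EReal) < ⊤} = Ici 0 := by ext; simp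
    rw [hIci] at hode hoff
    rw [EReal.comap_coe_nhdsLT_top]
    exact ⟨brockett_tendsto_x3_iff_tendsto_sigmaBI_atTop hγ hode hoff hx30,
      fun h => absurd h (lt_irrefl _)⟩
  | coe T =>
    rw [hIco] at hode hoff
    rw [EReal.comap_coe_nhdsLT_coe]
    have hx : Tendsto x (𝓝[<] T) (𝓝 0) :=
      (brockett_tendsto_zero_or_extends hγ (EReal.coe_pos.1 ht₀) hode hoff hx30).resolve_right
        fun ⟨ε, hε, y, hyx, hy⟩ => hmax (T + ε : ℝ) (EReal.coe_lt_coe_iff.2 (by linarith))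
          ⟨y, fun t h0 ht => hyx ⟨h0, EReal.coe_lt_coe_iff.1 ht⟩, by rwa [hIco]⟩
    exact ⟨iff_of_true (((PiLp.continuous_apply 2 _ 2).tendsto' 0 0 rfl).comp hx)
      ((continuous_sigmaBI.tendsto' 0 0 sigmaBI_zero).comp hx), fun _ => hx⟩

open Filter Topology in
/-- For a maximal continuously differentiable solution of the closed-loop Brockett system
on `[0, t₀)` (with `t₀ ≤ ∞`) with `x₃(0) > 0` and `σ(x(0)) ≠ 0`, staying off the planes
`σ = 0` and `x₃ = 0`, one has `x₃(t) → 0` as `t → t₀` iff `σ(x(t)) → 0` as `t → t₀`;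
consequently, if `t₀ < ∞` then `x(t) → 0` as `t → t₀`. -/
theorem brockett_escape_iff (γ : ℝ) (hγ : 0 < γ) (t₀ : EReal) (ht₀ : 0 < t₀)
    (x : ℝ → EuclideanSpace ℝ (Fin 3))
    (hx30 : 0 < x 0 2) (hσ0 : sigmaBI (x 0) ≠ 0)
    (hode : ∀ t ∈ {s : ℝ | 0 ≤ s ∧ (s : EReal) < t₀},
      HasDerivWithinAt x (brockettRHS γ (x t)) {s : ℝ | 0 ≤ s ∧ (s : EReal) < t₀} t)
    (hoff : ∀ t ∈ {s : ℝ | 0 ≤ s ∧ (s : EReal) < t₀}, sigmaBI (x t) ≠ 0 ∧ x t 2 ≠ 0)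
    (hmax : ∀ t₁ : EReal, t₀ < t₁ → ¬ ∃ y : ℝ → EuclideanSpace ℝ (Fin 3),
      (∀ t : ℝ, 0 ≤ t → (t : EReal) < t₀ → y t = x t) ∧
      ∀ t ∈ {s : ℝ | 0 ≤ s ∧ (s : EReal) < t₁}, sigmaBI (y t) ≠ 0 ∧ y t 2 ≠ 0 ∧
        HasDerivWithinAt y (brockettRHS γ (y t)) {s : ℝ | 0 ≤ s ∧ (s : EReal) < t₁} t) :
    (Tendsto (fun t => x t 2) (Filter.comap (fun t : ℝ => (t : EReal)) (𝓝[<] t₀)) (𝓝 0) ↔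
      Tendsto (fun t => sigmaBI (x t))
        (Filter.comap (fun t : ℝ => (t : EReal)) (𝓝[<] t₀)) (𝓝 0)) ∧
    (t₀ < ⊤ →
      Tendsto x (Filter.comap (fun t : ℝ => (t : EReal)) (𝓝[<] t₀)) (𝓝 0)) :=
  brockett_escape_iff_general γ hγ t₀ ht₀ x hx30 hode hoff hmax
end
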